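/- arXiv:2308.09785 — 3 statements merged into one kernel-verified Lean document; each statement's English description precedes it below -/
import Mathlib

section
/- If ν(ρ) = Σ_y α_y(ρ) ⊗ γ_y is a separable interaction channel and M = (K, ν, P) is a measurement model, then the observable measured by the instrument I^M is given by (I^M)^∧_x = Σ_y tr(γ_y P_x) \hat{α}_y, where \hat{α}_y = α_y^*(I) is the observable measured by the instrument α; hence (I^M)^∧ is a post-processing of \hat{α}. -/
open scoped Kronecker ComplexOrder
open Matrix

noncomputable section

namespace MM

/-- Complete positivity of a linear map between matrix algebras. -/
def IsCP {H R : Type*} [Fintype H] [Fintype R]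
    (Φ : Matrix H H ℂ →ₗ[ℂ] Matrix R R ℂ) : Prop :=
  ∀ (k : ℕ) (M : Matrix (H × Fin k) (H × Fin k) ℂ), M.PosSemidef →
    (Matrix.of fun p q : R × Fin k =>
      (Φ (Matrix.of fun i j => M (i, p.2) (j, q.2))) p.1 q.1).PosSemidef

/-- An operation: completely positive and trace non-increasing (on positive operators). -/
def IsOperation {H R : Type*} [Fintype H] [Fintype R]
    (Φ : Matrix H H ℂ →ₗ[ℂ] Matrix R R ℂ) : Prop :=
  IsCP Φ ∧ ∀ M : Matrix H H ℂ, M.PosSemidef → ((Φ M).trace).re ≤ (M.trace).re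

/-- A channel: completely positive and trace preserving. -/
def IsChannel {H R : Type*} [Fintype H] [Fintype R]
    (Φ : Matrix H H ℂ →ₗ[ℂ] Matrix R R ℂ) : Prop :=
  IsCP Φ ∧ ∀ M : Matrix H H ℂ, (Φ M).trace = M.trace

/-- A state: positive semidefinite with unit trace. -/
def IsState {H : Type*} [Fintype H] (ρ : Matrix H H ℂ) : Prop :=
  ρ.PosSemidef ∧ ρ.trace = 1

/-- An effect: 0 ≤ a ≤ I. -/
def IsEffect {H : Type*} [Fintype H] [DecidableEq H] (a : Matrix H H ℂ) : Prop :=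
  a.PosSemidef ∧ (1 - a).PosSemidef

/-- A (finite) observable: effects summing to the identity. -/
def IsObservable {X H : Type*} [Fintype X] [Fintype H] [DecidableEq H]
    (P : X → Matrix H H ℂ) : Prop :=
  (∀ x, IsEffect (P x)) ∧ ∑ x, P x = 1

/-- An instrument: operations summing to a channel. -/
def IsInstrument {Y H : Type*} [Fintype Y] [Fintype H]
    (α : Y → Matrix H H ℂ →ₗ[ℂ] Matrix H H ℂ) : Prop :=
  (∀ y, IsOperation (α y)) ∧ IsChannel (∑ y, α y)

/-- Partial trace over the second factor. -/
def trK {H K : Type*} [Fintype K] (M : Matrix (H × K) (H × K) ℂ) : Matrix H H ℂ :=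
  Matrix.of fun i j => ∑ a, M (i, a) (j, a)

/-- The instrument measured by a measurement model: ρ ↦ tr_K[ν(ρ)(I ⊗ P_x)]. -/
def measuredI {H K : Type*} [Fintype H] [Fintype K] [DecidableEq H] [DecidableEq K]
    (ν : Matrix H H ℂ →ₗ[ℂ] Matrix (H × K) (H × K) ℂ) (Px : Matrix K K ℂ)
    (ρ : Matrix H H ℂ) : Matrix H H ℂ :=
  trK (ν ρ * ((1 : Matrix H H ℂ) ⊗ₖ Px))

-- Auxiliary lemmas

lemma trace_nonneg' {H : Type*} [Fintype H] {M : Matrix H H ℂ}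
    (hM : M.PosSemidef) : 0 ≤ M.trace := by
  classical
  refine Finset.sum_nonneg fun i _ => ?_
  have h := hM.dotProduct_mulVec_nonneg (Pi.single i 1)
  simpa [dotProduct, Matrix.mulVec, Pi.single_apply, Finset.sum_ite_eq,
    Finset.sum_ite_eq'] using h

lemma quad_trace {H : Type*} [Fintype H] (v : H → ℂ) (B : Matrix H H ℂ) :
    (Matrix.vecMulVec v (star v) * B).trace = star v ⬝ᵥ (B *ᵥ v) := by
  simp only [Matrix.trace, Matrix.diag, Matrix.mul_apply, Matrix.vecMulVec_apply,
    dotProduct, Matrix.mulVec, Pi.star_apply, Finset.mul_sum]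
  rw [Finset.sum_comm]
  refine Finset.sum_congr rfl fun l _ => Finset.sum_congr rfl fun k _ => ?_
  ring

lemma vecMulVec_psd {H : Type*} [Fintype H] (v : H → ℂ) :
    (Matrix.vecMulVec v (star v)).PosSemidef := by
  refine Matrix.PosSemidef.of_dotProduct_mulVec_nonneg ?_ ?_
  · ext i j
    simp [Matrix.conjTranspose_apply, Matrix.vecMulVec_apply, mul_comm]
  · intro x
    have h : star x ⬝ᵥ (Matrix.vecMulVec v (star v) *ᵥ x)
        = (star x ⬝ᵥ v) * star (star x ⬝ᵥ v) := by
      simp only [dotProduct, Matrix.mulVec, Matrix.vecMulVec_apply, Pi.star_apply,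
        Finset.mul_sum, Finset.sum_mul, star_sum, star_mul', star_star]
      rw [Finset.sum_comm]
      refine Finset.sum_congr rfl fun l _ => Finset.sum_congr rfl fun k _ => ?_
      ring
    rw [h]
    exact mul_star_self_nonneg _

lemma IsCP.posSemidef_map {H R : Type*} [Fintype H] [Fintype R]
    {Φ : Matrix H H ℂ →ₗ[ℂ] Matrix R R ℂ} (hΦ : IsCP Φ)
    {M : Matrix H H ℂ} (hM : M.PosSemidef) : (Φ M).PosSemidef := by
  have h1 := hΦ 1 (M.submatrix Prod.fst Prod.fst) (hM.submatrix _)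
  have h2 := h1.submatrix (fun i : R => (i, (0 : Fin 1)))
  have he : Φ M = (Matrix.of fun p q : R × Fin 1 =>
      (Φ (Matrix.of fun i j => (M.submatrix Prod.fst Prod.fst) (i, p.2) (j, q.2))) p.1 q.1).submatrix
      (fun i : R => (i, (0 : Fin 1))) (fun i : R => (i, (0 : Fin 1))) := by
    ext i j
    rfl
  rw [he]
  exact h2

lemma ext_of_trace {H : Type*} [Fintype H] [DecidableEq H] {B C : Matrix H H ℂ}
    (h : ∀ ρ, (ρ * B).trace = (ρ * C).trace) : B = C := by
  ext i j
  have hh := h (Matrix.single j i 1)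
  simpa [Matrix.trace, Matrix.diag, Matrix.mul_apply, Matrix.single, Matrix.of_apply,
    Finset.sum_ite_eq, Finset.sum_ite_eq', ite_and] using hh

lemma isHermitian_of_real_quad {n : Type*} [Fintype n] [DecidableEq n] {B : Matrix n n ℂ}
    (h : ∀ v : n → ℂ, star (star v ⬝ᵥ B *ᵥ v) = star v ⬝ᵥ B *ᵥ v) : B.IsHermitian := by
  rw [Matrix.isHermitian_iff_isSymmetric, LinearMap.isSymmetric_iff_inner_map_self_real]
  intro v
  obtain ⟨x, rfl⟩ := (WithLp.equiv 2 (n → ℂ)).symm.surjective v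
  rw [show (WithLp.equiv 2 (n → ℂ)).symm x = WithLp.toLp 2 x from rfl, Matrix.toEuclideanLin_toLp,
    EuclideanSpace.inner_toLp_toLp, dotProduct_comm]
  have key : star (Matrix.toLin' B x) ⬝ᵥ x = star (star x ⬝ᵥ B *ᵥ x) := by
    simp only [Matrix.toLin'_apply, dotProduct, star_sum, star_mul', star_star,
      Pi.star_apply]
    exact Finset.sum_congr rfl fun l _ => mul_comm _ _
  rw [show (starRingEnd ℂ) (star (Matrix.toLin' B x) ⬝ᵥ x)
      = star (star (Matrix.toLin' B x) ⬝ᵥ x) from rfl, key, star_star, h x]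

lemma trace_mul_psd_nonneg {K : Type*} [Fintype K] [DecidableEq K] {g p : Matrix K K ℂ}
    (hg : g.PosSemidef) (hp : p.PosSemidef) : 0 ≤ (g * p).trace := by
  open scoped MatrixOrder in
  have hs : CFC.sqrt g * CFC.sqrt g = g := CFC.sqrt_mul_sqrt_self g hg.nonneg
  open scoped MatrixOrder in
  have h1 : (CFC.sqrt g * p * CFC.sqrt g).trace = (g * p).trace := by
    rw [Matrix.trace_mul_cycle, hs]
  rw [← h1]
  have := hp.mul_mul_conjTranspose_same (CFC.sqrt g)
  open scoped MatrixOrder in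
  rw [(CFC.sqrt_nonneg g).posSemidef.1.eq] at this
  exact trace_nonneg' this

lemma star_eq_self_of_nonneg {z : ℂ} (h : 0 ≤ z) : star z = z := by
  rw [Complex.star_def, Complex.conj_eq_iff_im]
  exact ((Complex.le_def.mp h).2).symm

lemma trK_trace {H K : Type*} [Fintype H] [Fintype K] (M : Matrix (H × K) (H × K) ℂ) :
    (trK M).trace = M.trace := by
  simp [trK, Matrix.trace, Matrix.diag, Fintype.sum_prod_type]


theorem stmt1 {H K X Y : Type*} [Fintype H] [Fintype K] [Fintype X] [Fintype Y]
    [DecidableEq H] [DecidableEq K]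
    (ν : Matrix H H ℂ →ₗ[ℂ] Matrix (H × K) (H × K) ℂ) (hν : IsChannel ν)
    (α : Y → Matrix H H ℂ →ₗ[ℂ] Matrix H H ℂ) (hα : IsInstrument α)
    (γ : Y → Matrix K K ℂ) (hγ : ∀ y, IsState (γ y))
    (hsep : ∀ ρ, ν ρ = ∑ y, (α y ρ) ⊗ₖ γ y)
    (P : X → Matrix K K ℂ) (hP : IsObservable P)
    (αd : Y → Matrix H H ℂ →ₗ[ℂ] Matrix H H ℂ)
    (hαd : ∀ y ρ B, (ρ * αd y B).trace = (α y ρ * B).trace)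
    (Ahat : X → Matrix H H ℂ)
    (hAhat : ∀ x ρ, (ρ * Ahat x).trace = (measuredI ν (P x) ρ).trace) :
    (∀ x, Ahat x = ∑ y, ((γ y * P x).trace) • αd y 1) ∧
    IsObservable (fun y => αd y 1) ∧
    (∀ y x, 0 ≤ ((γ y * P x).trace).re ∧ ((γ y * P x).trace).re ≤ 1 ∧
      ((γ y * P x).trace).im = 0) ∧
    (∀ y, ∑ x, (γ y * P x).trace = 1) := by
  -- trace of measured instrument
  have hmt : ∀ x ρ, (measuredI ν (P x) ρ).trace
      = ∑ y, (γ y * P x).trace * (α y ρ).trace := by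
    intro x ρ
    rw [measuredI, trK_trace, hsep, Finset.sum_mul, Matrix.trace_sum]
    refine Finset.sum_congr rfl fun y _ => ?_
    rw [← Matrix.mul_kronecker_mul, Matrix.trace_kronecker, mul_one, mul_comm]
  -- quadratic form of αd y 1
  have hquad : ∀ y (v : H → ℂ),
      star v ⬝ᵥ (αd y 1) *ᵥ v = (α y (Matrix.vecMulVec v (star v))).trace := by
    intro y v
    rw [← quad_trace, hαd, mul_one]
  have hαpsd : ∀ y (ρ : Matrix H H ℂ), ρ.PosSemidef → (α y ρ).PosSemidef :=
    fun y ρ h => IsCP.posSemidef_map (hα.1 y).1 h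
  have hnn : ∀ y (v : H → ℂ), 0 ≤ star v ⬝ᵥ (αd y 1) *ᵥ v := by
    intro y v
    rw [hquad]
    exact trace_nonneg' (hαpsd y _ (vecMulVec_psd v))
  have hBpsd : ∀ y, (αd y 1).PosSemidef :=
    fun y => Matrix.PosSemidef.of_dotProduct_mulVec_nonneg
      (isHermitian_of_real_quad (fun v => star_eq_self_of_nonneg (hnn y v))) (hnn y)
  have h1Bpsd : ∀ y, ((1 : Matrix H H ℂ) - αd y 1).PosSemidef := by
    intro y
    refine Matrix.PosSemidef.of_dotProduct_mulVec_nonneg (Matrix.isHermitian_one.sub (hBpsd y).1) fun v => ?_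
    rw [Matrix.sub_mulVec, dotProduct_sub, Matrix.one_mulVec, hquad]
    have htr : (Matrix.vecMulVec v (star v)).trace = star v ⬝ᵥ v := by
      have := quad_trace v (1 : Matrix H H ℂ)
      rwa [mul_one, Matrix.one_mulVec] at this
    have hv : (Matrix.vecMulVec v (star v)).PosSemidef := vecMulVec_psd v
    have h0 : 0 ≤ (α y (Matrix.vecMulVec v (star v))).trace :=
      trace_nonneg' (hαpsd y _ hv)
    have h1 : 0 ≤ (Matrix.vecMulVec v (star v)).trace := trace_nonneg' hv
    have hre := (hα.1 y).2 _ hv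
    refine sub_nonneg.mpr ?_
    rw [← htr]
    rw [Complex.le_def]
    exact ⟨hre, ((Complex.le_def.mp h0).2).symm.trans (Complex.le_def.mp h1).2⟩
  -- part 1
  have part1 : ∀ x, Ahat x = ∑ y, ((γ y * P x).trace) • αd y 1 := by
    intro x
    refine ext_of_trace fun ρ => ?_
    rw [hAhat, hmt, Finset.mul_sum, Matrix.trace_sum]
    refine Finset.sum_congr rfl fun y _ => ?_
    rw [Matrix.mul_smul, Matrix.trace_smul, hαd, mul_one, smul_eq_mul]
  -- part 2 : observable
  have hsumB : ∑ y, αd y 1 = (1 : Matrix H H ℂ) := by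
    refine ext_of_trace fun ρ => ?_
    rw [Finset.mul_sum, Matrix.trace_sum, mul_one]
    have : ∀ y, (ρ * αd y 1).trace = (α y ρ).trace := by
      intro y; rw [hαd, mul_one]
    rw [Finset.sum_congr rfl fun y _ => this y]
    have h2 : ∑ y, (α y ρ).trace = ((∑ y, α y) ρ).trace := by
      rw [LinearMap.sum_apply, Matrix.trace_sum]
    rw [h2, hα.2.2 ρ]
  -- part 3
  have hγP : ∀ y x, 0 ≤ (γ y * P x).trace :=
    fun y x => trace_mul_psd_nonneg (hγ y).1 (hP.1 x).1
  have hγP' : ∀ y x, 0 ≤ (γ y * (1 - P x)).trace :=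
    fun y x => trace_mul_psd_nonneg (hγ y).1 (hP.1 x).2
  have hcompl : ∀ y x, (γ y * (1 - P x)).trace = 1 - (γ y * P x).trace := by
    intro y x
    rw [Matrix.mul_sub, Matrix.trace_sub, mul_one, (hγ y).2]
  refine ⟨part1, ⟨fun y => ⟨hBpsd y, h1Bpsd y⟩, hsumB⟩, ?_, ?_⟩
  · intro y x
    have h0 := Complex.le_def.mp (hγP y x)
    have h1 := Complex.le_def.mp (hγP' y x)
    rw [hcompl y x] at h1
    refine ⟨h0.1, ?_, h0.2.symm⟩
    have := h1.1
    simp only [Complex.zero_re, Complex.sub_re, Complex.one_re] at this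
    linarith
  · intro y
    rw [← Matrix.trace_sum, ← Finset.mul_sum, hP.2, mul_one, (hγ y).2]


end MM
end
end

section
/- Let M = (K, ν, P) and M' = (K', ν', P') be measurement models with separable channels ν(ρ) = Σ_{x'} α_{x'}(ρ) ⊗ γ_{x'} and ν'(ρ) = Σ_{y'} α'_{y'}(ρ) ⊗ γ'_{y'}. Then the sequential product of the measured instruments satisfies (I^M ∘ I^{M'})_{(x,y)}(ρ) = Σ_{x',y'} tr(γ_{x'}P_x) tr(γ'_{y'}P'_y) α'_{y'}(α_{x'}(ρ)) for all states ρ. -/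
open scoped Kronecker ComplexOrder
open Matrix

noncomputable section

namespace MM

lemma trK_kron {H K : Type*} [Fintype K] (A : Matrix H H ℂ) (D : Matrix K K ℂ) :
    trK (A ⊗ₖ D) = D.trace • A := by
  ext i j
  simp [trK, Matrix.trace, Matrix.diag, Finset.mul_sum, mul_comm]

lemma measuredI_sep {H K X' : Type*} [Fintype H] [Fintype K] [Fintype X']
    [DecidableEq H] [DecidableEq K]
    (ν : Matrix H H ℂ →ₗ[ℂ] Matrix (H × K) (H × K) ℂ)
    (α : X' → Matrix H H ℂ →ₗ[ℂ] Matrix H H ℂ)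
    (γ : X' → Matrix K K ℂ)
    (hsep : ∀ ρ, ν ρ = ∑ x', (α x' ρ) ⊗ₖ γ x')
    (Px : Matrix K K ℂ) (ρ : Matrix H H ℂ) :
    measuredI ν Px ρ = ∑ x', ((γ x' * Px).trace) • α x' ρ := by
  unfold measuredI
  rw [hsep, Finset.sum_mul]
  have h1 : ∀ x' : X', (α x' ρ ⊗ₖ γ x') * ((1 : Matrix H H ℂ) ⊗ₖ Px)
      = (α x' ρ) ⊗ₖ (γ x' * Px) := by
    intro x'
    rw [← Matrix.mul_kronecker_mul, Matrix.mul_one]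
  simp only [h1]
  have h2 : trK (∑ x' : X', (α x' ρ) ⊗ₖ (γ x' * Px))
      = ∑ x' : X', trK ((α x' ρ) ⊗ₖ (γ x' * Px)) := by
    unfold trK
    ext i j
    simp only [Matrix.sum_apply, of_apply]
    rw [Finset.sum_comm]
  rw [h2]
  exact Finset.sum_congr rfl fun x' _ => trK_kron _ _

theorem stmt3 {H K K' X Y X' Y' : Type*} [Fintype H] [Fintype K] [Fintype K']
    [Fintype X] [Fintype Y] [Fintype X'] [Fintype Y']
    [DecidableEq H] [DecidableEq K] [DecidableEq K']
    (ν : Matrix H H ℂ →ₗ[ℂ] Matrix (H × K) (H × K) ℂ) (hν : IsChannel ν)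
    (ν' : Matrix H H ℂ →ₗ[ℂ] Matrix (H × K') (H × K') ℂ) (hν' : IsChannel ν')
    (α : X' → Matrix H H ℂ →ₗ[ℂ] Matrix H H ℂ) (hα : IsInstrument α)
    (α' : Y' → Matrix H H ℂ →ₗ[ℂ] Matrix H H ℂ) (hα' : IsInstrument α')
    (γ : X' → Matrix K K ℂ) (hγ : ∀ x', IsState (γ x'))
    (γ' : Y' → Matrix K' K' ℂ) (hγ' : ∀ y', IsState (γ' y'))
    (hsep : ∀ ρ, ν ρ = ∑ x', (α x' ρ) ⊗ₖ γ x')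
    (hsep' : ∀ ρ, ν' ρ = ∑ y', (α' y' ρ) ⊗ₖ γ' y')
    (P : X → Matrix K K ℂ) (hP : IsObservable P)
    (P' : Y → Matrix K' K' ℂ) (hP' : IsObservable P') :
    ∀ x y ρ, IsState ρ →
      measuredI ν' (P' y) (measuredI ν (P x) ρ) =
        ∑ x', ∑ y', (((γ x' * P x).trace) * ((γ' y' * P' y).trace)) •
          (α' y') ((α x') ρ) := by
  intro x y ρ _
  rw [measuredI_sep ν α γ hsep, measuredI_sep ν' α' γ' hsep']
  rw [Finset.sum_comm]
  refine Finset.sum_congr rfl fun y' _ => ?_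
  rw [map_sum, Finset.smul_sum]
  refine Finset.sum_congr rfl fun x' _ => ?_
  rw [LinearMap.map_smul, smul_smul, mul_comm]

end MM
end
end

section
/- Let ν(ρ) = Σ_{x'} α_{x'}(ρ) ⊗ γ_{x'} and ν'(ρ) = Σ_{y'} α'_{y'}(ρ) ⊗ γ'_{y'} be separable channels. Then the channel μ: S(H) → S(H⊗K⊗K') defined by μ(ρ) = Σ_{x',y'} α'_{y'}(α_{x'}(ρ)) ⊗ γ_{x'} ⊗ γ'_{y'} is a product channel for ν, ν'; that is, tr_{K⊗K'}[μ(ρ)(I⊗a⊗b)] = tr_{K'}{ν'[tr_K(ν(ρ)(I⊗a))](I⊗b)} for all effects a on K, b on K', and all states ρ. -/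
open scoped Kronecker ComplexOrder
open Matrix

noncomputable section

namespace MM

/-! ### Auxiliary lemmas -/

lemma posSemidef_add' {n : Type*} [Fintype n] {A B : Matrix n n ℂ}
    (hA : A.PosSemidef) (hB : B.PosSemidef) : (A + B).PosSemidef := by
  refine ⟨hA.1.add hB.1, fun x => ?_⟩
  exact (hA.add hB).2 x

lemma posSemidef_sum' {n ι : Type*} [Fintype n] (s : Finset ι) (f : ι → Matrix n n ℂ)
    (h : ∀ i ∈ s, (f i).PosSemidef) : (∑ i ∈ s, f i).PosSemidef := by
  classical
  induction s using Finset.induction_on with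
  | empty => simpa using Matrix.PosSemidef.zero
  | insert _ _ hx ih =>
    rw [Finset.sum_insert hx]
    exact posSemidef_add' (h _ (Finset.mem_insert_self _ _))
      (ih fun i hi => h i (Finset.mem_insert_of_mem hi))

lemma kron_conjTranspose' {m n : Type*} (A : Matrix m m ℂ) (B : Matrix n n ℂ) :
    (A ⊗ₖ B)ᴴ = Aᴴ ⊗ₖ Bᴴ := by
  ext ⟨i, p⟩ ⟨j, q⟩
  simp [conjTranspose_apply, mul_comm]

lemma posSemidef_kron' {m n : Type*} [Fintype m] [Fintype n] {A : Matrix m m ℂ}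
    {B : Matrix n n ℂ} (hA : A.PosSemidef) (hB : B.PosSemidef) :
    (A ⊗ₖ B).PosSemidef := by
  exact hA.kronecker hB

lemma trK_kron_mul {H L : Type*} [Fintype H] [Fintype L] [DecidableEq H]
    (A : Matrix H H ℂ) (B C : Matrix L L ℂ) :
    trK ((A ⊗ₖ B) * ((1 : Matrix H H ℂ) ⊗ₖ C)) = (B * C).trace • A := by
  ext i j
  simp only [trK, Matrix.of_apply, Matrix.mul_apply, Matrix.trace, Matrix.diag,
    kroneckerMap_apply, Matrix.smul_apply, smul_eq_mul, Fintype.sum_prod_type,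
    Matrix.one_apply]
  simp only [mul_ite, mul_one, mul_zero, ite_mul, zero_mul, Finset.sum_ite_eq',
    Finset.mem_univ, if_true]
  have key : ∀ x : L, (∑ x_1 : H, ∑ x_2 : L,
      if x_1 = j then A i x_1 * B x x_2 * (1 * C x_2 x) else 0)
      = ∑ x_2 : L, A i j * B x x_2 * (1 * C x_2 x) := by
    intro x
    rw [Finset.sum_comm]
    simp [Finset.sum_ite_eq']
  rw [Finset.sum_congr rfl fun x _ => key x]
  rw [Finset.sum_mul]
  refine Finset.sum_congr rfl fun x _ => ?_
  rw [Finset.sum_mul]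
  refine Finset.sum_congr rfl fun q _ => ?_
  ring

lemma trK_sum {H K ι : Type*} [Fintype K] (s : Finset ι)
    (f : ι → Matrix (H × K) (H × K) ℂ) :
    trK (∑ i ∈ s, f i) = ∑ i ∈ s, trK (f i) := by
  ext i j
  simp only [trK, Matrix.of_apply, Finset.sum_apply, Matrix.sum_apply]
  rw [Finset.sum_comm]

lemma trK_smul {H K : Type*} [Fintype K] (c : ℂ) (M : Matrix (H × K) (H × K) ℂ) :
    trK (c • M) = c • trK M := by
  ext i j
  simp [trK, Finset.mul_sum]

theorem stmt5 {H K K' X' Y' : Type*} [Fintype H] [Fintype K] [Fintype K']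
    [Fintype X'] [Fintype Y'] [DecidableEq H] [DecidableEq K] [DecidableEq K']
    (ν : Matrix H H ℂ →ₗ[ℂ] Matrix (H × K) (H × K) ℂ) (hν : IsChannel ν)
    (ν' : Matrix H H ℂ →ₗ[ℂ] Matrix (H × K') (H × K') ℂ) (hν' : IsChannel ν')
    (α : X' → Matrix H H ℂ →ₗ[ℂ] Matrix H H ℂ) (hα : IsInstrument α)
    (α' : Y' → Matrix H H ℂ →ₗ[ℂ] Matrix H H ℂ) (hα' : IsInstrument α')
    (γ : X' → Matrix K K ℂ) (hγ : ∀ x', IsState (γ x'))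
    (γ' : Y' → Matrix K' K' ℂ) (hγ' : ∀ y', IsState (γ' y'))
    (hsep : ∀ ρ, ν ρ = ∑ x', (α x' ρ) ⊗ₖ γ x')
    (hsep' : ∀ ρ, ν' ρ = ∑ y', (α' y' ρ) ⊗ₖ γ' y')
    (μ : Matrix H H ℂ →ₗ[ℂ] Matrix (H × (K × K')) (H × (K × K')) ℂ)
    (hμdef : ∀ ρ, μ ρ = ∑ x', ∑ y', ((α' y') ((α x') ρ)) ⊗ₖ (γ x' ⊗ₖ γ' y')) :
    IsChannel μ ∧
    ∀ (a : Matrix K K ℂ) (b : Matrix K' K' ℂ) (ρ : Matrix H H ℂ),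
      IsEffect a → IsEffect b → IsState ρ →
      trK (μ ρ * ((1 : Matrix H H ℂ) ⊗ₖ (a ⊗ₖ b))) =
        trK (ν' (trK (ν ρ * ((1 : Matrix H H ℂ) ⊗ₖ a))) *
          ((1 : Matrix H H ℂ) ⊗ₖ b)) := by
  classical
  constructor
  · constructor
    · -- complete positivity
      intro k M hM
      set e : (H × (K × K')) × Fin k → (H × Fin k) × (K × K') :=
        fun p => ((p.1.1, p.2), p.1.2) with he
      have hN : ∀ x', (Matrix.of fun p q : H × Fin k =>
          (α x' (Matrix.of fun i j => M (i, p.2) (j, q.2))) p.1 q.1).PosSemidef :=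
        fun x' => (hα.1 x').1 k M hM
      have hR : ∀ x' y', (Matrix.of fun p q : H × Fin k =>
          (α' y' (α x' (Matrix.of fun i j => M (i, p.2) (j, q.2)))) p.1 q.1).PosSemidef := by
        intro x' y'
        exact (hα'.1 y').1 k _ (hN x')
      have key : (Matrix.of fun p q : (H × (K × K')) × Fin k =>
          (μ (Matrix.of fun i j => M (i, p.2) (j, q.2))) p.1 q.1)
          = ∑ x', ∑ y', ((Matrix.of fun p q : H × Fin k =>
              (α' y' (α x' (Matrix.of fun i j => M (i, p.2) (j, q.2)))) p.1 q.1)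
              ⊗ₖ (γ x' ⊗ₖ γ' y')).submatrix e e := by
        ext p q
        simp only [Matrix.of_apply, hμdef, Matrix.sum_apply, Matrix.submatrix_apply,
          kroneckerMap_apply, he]
      rw [key]
      refine posSemidef_sum' _ _ fun x' _ => posSemidef_sum' _ _ fun y' _ => ?_
      exact (posSemidef_kron' (hR x' y')
        (posSemidef_kron' (hγ x').1 (hγ' y').1)).submatrix e
    · -- trace preservation
      intro ρ
      rw [hμdef]
      rw [Matrix.trace_sum]
      have hterm : ∀ x', (∑ y', (α' y') ((α x') ρ) ⊗ₖ (γ x' ⊗ₖ γ' y')).trace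
          = ((α x') ρ).trace := by
        intro x'
        rw [Matrix.trace_sum]
        have : ∀ y', ((α' y') ((α x') ρ) ⊗ₖ (γ x' ⊗ₖ γ' y')).trace
            = ((α' y') ((α x') ρ)).trace := by
          intro y'
          rw [Matrix.trace_kronecker, Matrix.trace_kronecker, (hγ x').2, (hγ' y').2]
          ring
        rw [Finset.sum_congr rfl fun y' _ => this y']
        have := hα'.2.2 ((α x') ρ)
        rw [LinearMap.sum_apply, Matrix.trace_sum] at this
        exact this
      rw [Finset.sum_congr rfl fun x' _ => hterm x']
      have := hα.2.2 ρ
      rw [LinearMap.sum_apply, Matrix.trace_sum] at this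
      exact this
  · -- product channel property
    intro a b ρ _ _ _
    have hL : trK (μ ρ * ((1 : Matrix H H ℂ) ⊗ₖ (a ⊗ₖ b)))
        = ∑ x', ∑ y', ((γ x' * a).trace * (γ' y' * b).trace) • (α' y') ((α x') ρ) := by
      rw [hμdef, Finset.sum_mul, trK_sum]
      refine Finset.sum_congr rfl fun x' _ => ?_
      rw [Finset.sum_mul, trK_sum]
      refine Finset.sum_congr rfl fun y' _ => ?_
      rw [trK_kron_mul, ← mul_kronecker_mul, Matrix.trace_kronecker]
    have hstep : trK (ν ρ * ((1 : Matrix H H ℂ) ⊗ₖ a))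
        = ∑ x', (γ x' * a).trace • (α x') ρ := by
      rw [hsep, Finset.sum_mul, trK_sum]
      exact Finset.sum_congr rfl fun x' _ => trK_kron_mul _ _ _
    rw [hL, hstep, map_sum]
    simp only [_root_.map_smul]
    rw [Finset.sum_mul, trK_sum]
    refine Finset.sum_congr rfl fun x' _ => ?_
    rw [smul_mul_assoc, trK_smul, hsep', Finset.sum_mul, trK_sum, Finset.smul_sum]
    refine Finset.sum_congr rfl fun y' _ => ?_
    rw [trK_kron_mul, smul_smul]


end MM
end
end
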